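/- arXiv:1703.03660 — 2 statements merged into one kernel-verified Lean document; each statement's English description precedes it below -/
import Mathlib

section
/- Let F be a J-frame for H with synthesis operator T and J-frame operator S = TT⁺. A Bessel family G = {g_i} with synthesis operator V satisfies the duality relations T P₊ V⁺ = Q and T P₋ V⁺ = I − Q (where Q = P_{M₊//M₋}) if and only if V = S⁻¹T + W for some bounded operator W : ℓ²(I) → H with N(T)^{[⊥]} ⊆ N(W). -/
noncomputable section

open scoped Classical

open Function

/-- The indefinite inner product `[x,y] = ⟨Jx, y⟩` induced by an operator `J`. -/
def kre {E : Type*} [NormedAddCommGroup E] [InnerProductSpace ℂ E]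
    (J : E →L[ℂ] E) (x y : E) : ℂ := @inner ℂ _ _ (J x) y

/-- `J` is a fundamental symmetry: a selfadjoint unitary (involutive) operator. -/
def IsFundSym {E : Type*} [NormedAddCommGroup E] [InnerProductSpace ℂ E] [CompleteSpace E]
    (J : E →L[ℂ] E) : Prop :=
  IsSelfAdjoint J ∧ J.comp J = ContinuousLinearMap.id ℂ E

/-- The J-orthogonal companion of a subspace. -/
def JorthCompanion {E : Type*} [NormedAddCommGroup E] [InnerProductSpace ℂ E]
    (J : E →L[ℂ] E) (S : Submodule ℂ E) : Submodule ℂ E where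
  carrier := {x | ∀ s ∈ S, kre J x s = 0}
  zero_mem' := by intro s hs; simp [kre]
  add_mem' := by
    intro a b ha hb s hs
    have h1 := ha s hs
    have h2 := hb s hs
    simp only [kre, map_add, inner_add_left] at h1 h2 ⊢
    rw [h1, h2, add_zero]
  smul_mem' := by
    intro c x hx s hs
    have h1 := hx s hs
    simp only [kre, map_smul, inner_smul_left] at h1 ⊢
    rw [h1, mul_zero]

/-- Uniformly J-positive subspace. -/
def UnifJPos {E : Type*} [NormedAddCommGroup E] [InnerProductSpace ℂ E]
    (J : E →L[ℂ] E) (S : Submodule ℂ E) : Prop :=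
  ∃ α : ℝ, 0 < α ∧ ∀ x ∈ S, α * ‖x‖ ^ 2 ≤ (kre J x x).re

/-- Uniformly J-negative subspace. -/
def UnifJNeg {E : Type*} [NormedAddCommGroup E] [InnerProductSpace ℂ E]
    (J : E →L[ℂ] E) (S : Submodule ℂ E) : Prop :=
  ∃ α : ℝ, 0 < α ∧ ∀ x ∈ S, (kre J x x).re ≤ -(α * ‖x‖ ^ 2)

/-- Maximal uniformly J-positive subspace. -/
def MaxUnifJPos {E : Type*} [NormedAddCommGroup E] [InnerProductSpace ℂ E]
    (J : E →L[ℂ] E) (S : Submodule ℂ E) : Prop :=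
  UnifJPos J S ∧ ∀ S' : Submodule ℂ E, UnifJPos J S' → S ≤ S' → S' = S

/-- Maximal uniformly J-negative subspace. -/
def MaxUnifJNeg {E : Type*} [NormedAddCommGroup E] [InnerProductSpace ℂ E]
    (J : E →L[ℂ] E) (S : Submodule ℂ E) : Prop :=
  UnifJNeg J S ∧ ∀ S' : Submodule ℂ E, UnifJNeg J S' → S ≤ S' → S' = S

/-- J-selfadjoint operator (with respect to the indefinite inner product of `J`). -/
def IsJSelfAdj {E : Type*} [NormedAddCommGroup E] [InnerProductSpace ℂ E]
    (J : E →L[ℂ] E) (A : E →L[ℂ] E) : Prop :=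
  ∀ x y : E, kre J (A x) y = kre J x (A y)

/-- The J-order: `A ≤_J B` iff `B - A` is J-positive. -/
def JLe {E : Type*} [NormedAddCommGroup E] [InnerProductSpace ℂ E]
    (J : E →L[ℂ] E) (A B : E →L[ℂ] E) : Prop :=
  ∀ x : E, 0 ≤ (kre J (B x - A x) x).re ∧ (kre J (B x - A x) x).im = 0

/-- The subspace of `ℓ²(I)` supported on a subset (given by a predicate) of `I`. -/
def suppSub {I : Type*} (A : I → Prop) : Submodule ℂ (lp (fun _ : I => ℂ) 2) where
  carrier := {x | ∀ i, ¬ A i → x i = 0}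
  zero_mem' := by intro i _; rfl
  add_mem' := by
    intro a b ha hb i hi
    have : (↑(a + b) : ∀ i, ℂ) i = a i + b i := by
      rw [lp.coeFn_add]; rfl
    simp [this, ha i hi, hb i hi]
  smul_mem' := by
    intro c x hx i hi
    have : (↑(c • x) : ∀ i, ℂ) i = c • x i := by
      rw [lp.coeFn_smul]; rfl
    simp [this, hx i hi]

variable {H : Type*} [NormedAddCommGroup H] [InnerProductSpace ℂ H] [CompleteSpace H]
variable {I : Type*} [DecidableEq I]

/-- `i` is a "positive index" for the family `f` w.r.t. `J`: `[f i, f i] ≥ 0`. -/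
def posIdx {H : Type*} [NormedAddCommGroup H] [InnerProductSpace ℂ H]
    (J : H →L[ℂ] H) (f : I → H) (i : I) : Prop := 0 ≤ (kre J (f i) (f i)).re

/-- The sign `σ_i = sgn [f i, f i]` (as a complex scalar, `+1` on `I₊` and `-1` on `I₋`). -/
def sgnv {H : Type*} [NormedAddCommGroup H] [InnerProductSpace ℂ H]
    (J : H →L[ℂ] H) (f : I → H) (i : I) : ℂ := if posIdx J f i then 1 else -1

/-- Closure of the span of the vectors of the family `h` with positive indices (signs taken
from the family `f`). -/
def posSpan {H : Type*} [NormedAddCommGroup H] [InnerProductSpace ℂ H]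
    (J : H →L[ℂ] H) (f h : I → H) : Submodule ℂ H :=
  (Submodule.span ℂ {x | ∃ i, posIdx J f i ∧ h i = x}).topologicalClosure

/-- Closure of the span of the vectors of the family `h` with negative indices. -/
def negSpan {H : Type*} [NormedAddCommGroup H] [InnerProductSpace ℂ H]
    (J : H →L[ℂ] H) (f h : I → H) : Submodule ℂ H :=
  (Submodule.span ℂ {x | ∃ i, ¬ posIdx J f i ∧ h i = x}).topologicalClosure

/-- A Bessel family in a Hilbert space. -/
def IsBessel {H : Type*} [NormedAddCommGroup H] [InnerProductSpace ℂ H]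
    (g : I → H) : Prop :=
  ∃ β : ℝ, ∀ (x : H) (s : Finset I),
    ∑ i ∈ s, ‖@inner ℂ _ _ (g i) x‖ ^ 2 ≤ β * ‖x‖ ^ 2

/-- `g` is a dual family for `f`: the signs coincide and the two indefinite
reconstruction formulas hold. -/
def IsDualFamily {H : Type*} [NormedAddCommGroup H] [InnerProductSpace ℂ H]
    (J : H →L[ℂ] H) (f g : I → H) : Prop :=
  (∀ i, Real.sign ((kre J (g i) (g i)).re) = Real.sign ((kre J (f i) (f i)).re)) ∧
  (∀ x : H, HasSum (fun i => (sgnv J f i * kre J x (f i)) • g i) x) ∧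
  (∀ x : H, HasSum (fun i => (sgnv J f i * kre J x (g i)) • f i) x)

/-! Put `W := V - S⁻¹T`. Since `S = TT⁺` is `J`-selfadjoint, so is `S⁻¹`, and the Krein adjoint
of `W` is `D := V⁺ - T⁺S⁻¹`. As the indefinite inner products are nondegenerate and `N(T)` is
closed, `W` vanishes on `N(T)^[⊥]` exactly when `R(D) ⊆ N(T)`, i.e. when `TV⁺ = TT⁺S⁻¹ = I`.
On the other hand `QT = TP₊` and `P₊ + P₋ = I`, so the two duality relations together are
equivalent to the single identity `TV⁺ = I`. -/

section Projections

variable {E F : Type*} [NormedAddCommGroup E] [InnerProductSpace ℂ E]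
  [NormedAddCommGroup F] [InnerProductSpace ℂ F]

theorem comp_add_eq_of_range_le {Q : F →L[ℂ] F} {A B : E →L[ℂ] F} (hQ : Q.comp Q = Q)
    (hA : LinearMap.range (A : E →ₗ[ℂ] F) ≤ LinearMap.range (Q : F →ₗ[ℂ] F))
    (hB : LinearMap.range (B : E →ₗ[ℂ] F) ≤ LinearMap.ker (Q : F →ₗ[ℂ] F)) :
    Q.comp (A + B) = A := by
  ext x
  obtain ⟨z, hz : Q z = A x⟩ := hA ⟨x, rfl⟩
  have hBx : Q (B x) = 0 := hB ⟨x, rfl⟩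
  change Q (A x + B x) = A x
  rw [map_add, hBx, add_zero, ← hz]
  exact DFunLike.congr_fun hQ z

theorem comp_comp_eq_and_comp_comp_eq_sub_iff {T : E →L[ℂ] F} {Pp Pm : E →L[ℂ] E}
    {Q : F →L[ℂ] F} {Vp : F →L[ℂ] E} (hQT : Q.comp T = T.comp Pp)
    (hP : Pp + Pm = ContinuousLinearMap.id ℂ E) :
    (T.comp (Pp.comp Vp) = Q ∧ T.comp (Pm.comp Vp) = ContinuousLinearMap.id ℂ F - Q) ↔
      T.comp Vp = ContinuousLinearMap.id ℂ F := by
  have hsplit : T.comp Vp = T.comp (Pp.comp Vp) + T.comp (Pm.comp Vp) := by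
    rw [← ContinuousLinearMap.comp_add, ← ContinuousLinearMap.add_comp, hP,
      ContinuousLinearMap.id_comp]
  constructor
  · rintro ⟨hp, hm⟩
    rw [hsplit, hp, hm, add_sub_cancel]
  · intro hV
    have hp : T.comp (Pp.comp Vp) = Q := by
      rw [← ContinuousLinearMap.comp_assoc, ← hQT, ContinuousLinearMap.comp_assoc, hV,
        ContinuousLinearMap.comp_id]
    exact ⟨hp, by rw [← hV, hsplit, hp, add_sub_cancel_left]⟩

theorem range_sub_le_ker_iff_comp_eq {T : E →L[ℂ] F} {A B : F →L[ℂ] E} :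
    LinearMap.range ((A - B : F →L[ℂ] E) : F →ₗ[ℂ] E) ≤ LinearMap.ker (T : E →ₗ[ℂ] F) ↔
      T.comp A = T.comp B := by
  rw [LinearMap.range_le_ker_iff, ← ContinuousLinearMap.toLinearMap_comp,
    ← ContinuousLinearMap.toLinearMap_zero, ContinuousLinearMap.coe_inj, ContinuousLinearMap.comp_sub, sub_eq_zero]

end Projections

section SignOperator

variable {ι : Type*} {p : ι → Prop} [DecidablePred p]
  {Pp Pm : lp (fun _ : ι => ℂ) 2 →L[ℂ] lp (fun _ : ι => ℂ) 2}

theorem add_eq_id_of_apply_eq_ite (hPp : ∀ x i, Pp x i = if p i then x i else 0)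
    (hPm : ∀ x i, Pm x i = if p i then 0 else x i) :
    Pp + Pm = ContinuousLinearMap.id ℂ _ := by
  ext x i
  change Pp x i + Pm x i = x i
  rw [hPp, hPm]
  split_ifs <;> simp

theorem sub_apply_eq_ite (hPp : ∀ x i, Pp x i = if p i then x i else 0)
    (hPm : ∀ x i, Pm x i = if p i then 0 else x i) (x : lp (fun _ : ι => ℂ) 2) (i : ι) :
    (Pp - Pm) x i = if p i then x i else -x i := by
  change Pp x i - Pm x i = _
  rw [hPp, hPm]
  split_ifs <;> simp

theorem isFundSym_sub_of_apply_eq_ite (hPp : ∀ x i, Pp x i = if p i then x i else 0)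
    (hPm : ∀ x i, Pm x i = if p i then 0 else x i) : IsFundSym (Pp - Pm) := by
  have h := sub_apply_eq_ite hPp hPm
  refine ⟨LinearMap.IsSymmetric.isSelfAdjoint fun x y => ?_, ?_⟩
  · change inner ℂ ((Pp - Pm) x) y = inner ℂ x ((Pp - Pm) y)
    rw [lp.inner_eq_tsum, lp.inner_eq_tsum]
    refine tsum_congr fun i => ?_
    rw [h, h]
    split_ifs <;> simp
  · ext x i
    change (Pp - Pm) ((Pp - Pm) x) i = x i
    rw [h, h]
    split_ifs <;> simp

end SignOperator

section KreinAdjoint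

variable {E F : Type*} [NormedAddCommGroup E] [InnerProductSpace ℂ E]
  [NormedAddCommGroup F] [InnerProductSpace ℂ F]

def IsKreinAdjoint (JE : E →L[ℂ] E) (JF : F →L[ℂ] F) (A : E →L[ℂ] F) (B : F →L[ℂ] E) : Prop :=
  ∀ x y, kre JF (A x) y = kre JE x (B y)

theorem kre_conj_symm [CompleteSpace E] {J : E →L[ℂ] E} (hJ : IsSelfAdjoint J) (x y : E) :
    starRingEnd ℂ (kre J x y) = kre J y x := by
  rw [kre, kre, inner_conj_symm, hJ.isSymmetric.apply_clm]

theorem eq_zero_of_forall_kre_eq_zero {J : E →L[ℂ] E} (hJ : Injective J) {x : E}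
    (h : ∀ y, kre J x y = 0) : x = 0 :=
  hJ <| by rw [map_zero, ← inner_self_eq_zero (𝕜 := ℂ)]; exact h (J x)

theorem IsKreinAdjoint.sub {JE : E →L[ℂ] E} {JF : F →L[ℂ] F} {A A' : E →L[ℂ] F}
    {B B' : F →L[ℂ] E} (h : IsKreinAdjoint JE JF A B) (h' : IsKreinAdjoint JE JF A' B') :
    IsKreinAdjoint JE JF (A - A') (B - B') := fun x y => by
  have hxy := h x y
  have hxy' := h' x y
  simp only [kre] at hxy hxy'
  simp only [kre, sub_apply, map_sub, inner_sub_left, inner_sub_right, hxy, hxy']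

theorem IsKreinAdjoint.comp {G : Type*} [NormedAddCommGroup G] [InnerProductSpace ℂ G]
    {JE : E →L[ℂ] E} {JF : F →L[ℂ] F} {JG : G →L[ℂ] G} {A : E →L[ℂ] F} {B : F →L[ℂ] E}
    {A' : F →L[ℂ] G} {B' : G →L[ℂ] F} (h : IsKreinAdjoint JE JF A B)
    (h' : IsKreinAdjoint JF JG A' B') : IsKreinAdjoint JE JG (A'.comp A) (B.comp B') :=
  fun x y => (h' (A x) y).trans (h x (B' y))

theorem IsKreinAdjoint.isJSelfAdj_comp [CompleteSpace E] [CompleteSpace F] {JE : E →L[ℂ] E}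
    {JF : F →L[ℂ] F} {T : E →L[ℂ] F} {Tp : F →L[ℂ] E} (hJE : IsSelfAdjoint JE)
    (hJF : IsSelfAdjoint JF) (h : IsKreinAdjoint JE JF T Tp) : IsJSelfAdj JF (T.comp Tp) :=
  fun x y => calc
    kre JF (T (Tp x)) y = starRingEnd ℂ (kre JE (Tp y) (Tp x)) := by
      rw [h, kre_conj_symm hJE]
    _ = kre JF x (T (Tp y)) := by rw [← h, kre_conj_symm hJF]

theorem IsJSelfAdj.of_comp_eq_id {J S Sinv : E →L[ℂ] E} (hS : IsJSelfAdj J S)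
    (hSinv : S.comp Sinv = ContinuousLinearMap.id ℂ E) : IsJSelfAdj J Sinv := fun x y => by
  have hS' : ∀ z, S (Sinv z) = z := fun z => DFunLike.congr_fun hSinv z
  calc kre J (Sinv x) y = kre J (Sinv x) (S (Sinv y)) := by rw [hS']
    _ = kre J x (Sinv y) := by rw [← hS, hS']

theorem jorthCompanion_le_ker_iff [CompleteSpace E] {JE : E →L[ℂ] E} {JF : F →L[ℂ] F}
    {W : E →L[ℂ] F} {D : F →L[ℂ] E} (hJE : JE.comp JE = ContinuousLinearMap.id ℂ E)
    (hJF : Injective JF) (hWD : IsKreinAdjoint JE JF W D) {N : Submodule ℂ E}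
    (hN : IsClosed (N : Set E)) :
    JorthCompanion JE N ≤ LinearMap.ker (W : E →ₗ[ℂ] F) ↔
      LinearMap.range (D : F →ₗ[ℂ] E) ≤ N := by
  have hJE' : ∀ u, JE (JE u) = u := fun u => DFunLike.congr_fun hJE u
  constructor
  · rintro hW _ ⟨y, rfl⟩
    rw [← hN.submodule_topologicalClosure_eq, ← N.orthogonal_orthogonal_eq_closure,
      Submodule.mem_orthogonal]
    intro u hu
    have hJu : JE u ∈ JorthCompanion JE N := fun s hs => by
      rw [kre, hJE', ← inner_conj_symm, Submodule.inner_right_of_mem_orthogonal hs hu, map_zero]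
    have := hWD (JE u) y
    rwa [show W (JE u) = 0 from hW hJu, kre, map_zero, inner_zero_left, kre, hJE', eq_comm]
      at this
  · intro hD x hx
    exact eq_zero_of_forall_kre_eq_zero hJF fun y => (hWD x y).trans (hx _ (hD ⟨y, rfl⟩))

end KreinAdjoint

theorem dual_family_characterization_general
    (J : H →L[ℂ] H) (hJ : IsFundSym J) (f : I → H)
    (T : lp (fun _ : I => ℂ) 2 →L[ℂ] H)
    (Pp Pm : lp (fun _ : I => ℂ) 2 →L[ℂ] lp (fun _ : I => ℂ) 2)
    (hPp : ∀ (x : lp (fun _ : I => ℂ) 2) (i : I), Pp x i = if posIdx J f i then x i else 0)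
    (hPm : ∀ (x : lp (fun _ : I => ℂ) 2) (i : I), Pm x i = if posIdx J f i then 0 else x i)
    (Tp : H →L[ℂ] lp (fun _ : I => ℂ) 2)
    (hTp : ∀ (x : lp (fun _ : I => ℂ) 2) (y : H), kre J (T x) y = kre (Pp - Pm) x (Tp y))
    (Sinv : H →L[ℂ] H)
    (hS1 : (T.comp Tp).comp Sinv = ContinuousLinearMap.id ℂ H)
    (Q : H →L[ℂ] H) (hQidem : Q.comp Q = Q)
    (hQran : LinearMap.range (Q : H →ₗ[ℂ] H) = LinearMap.range (T.comp Pp : lp (fun _ : I => ℂ) 2 →ₗ[ℂ] H))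
    (hQker : LinearMap.ker (Q : H →ₗ[ℂ] H) = LinearMap.range (T.comp Pm : lp (fun _ : I => ℂ) 2 →ₗ[ℂ] H))
    (V : lp (fun _ : I => ℂ) 2 →L[ℂ] H)
    (Vp : H →L[ℂ] lp (fun _ : I => ℂ) 2)
    (hVp : ∀ (x : lp (fun _ : I => ℂ) 2) (y : H), kre J (V x) y = kre (Pp - Pm) x (Vp y)) :
    (T.comp (Pp.comp Vp) = Q ∧
        T.comp (Pm.comp Vp) = ContinuousLinearMap.id ℂ H - Q) ↔
      ∃ W : lp (fun _ : I => ℂ) 2 →L[ℂ] H, V = Sinv.comp T + W ∧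
        JorthCompanion (Pp - Pm) (LinearMap.ker (T : lp (fun _ : I => ℂ) 2 →ₗ[ℂ] H)) ≤ LinearMap.ker (W : lp (fun _ : I => ℂ) 2 →ₗ[ℂ] H) := by
  have hJ₂ : IsFundSym (Pp - Pm) := isFundSym_sub_of_apply_eq_ite hPp hPm
  have hP : Pp + Pm = ContinuousLinearMap.id ℂ _ := add_eq_id_of_apply_eq_ite hPp hPm
  have hQT : Q.comp T = T.comp Pp := by
    conv_lhs => rw [← T.comp_id, ← hP, T.comp_add]
    exact comp_add_eq_of_range_le hQidem hQran.ge hQker.ge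
  have hSinv : IsJSelfAdj J Sinv :=
    (IsKreinAdjoint.isJSelfAdj_comp hJ₂.1 hJ.1 hTp).of_comp_eq_id hS1
  have hW : IsKreinAdjoint (Pp - Pm) J (V - Sinv.comp T) (Vp - Tp.comp Sinv) :=
    IsKreinAdjoint.sub hVp (IsKreinAdjoint.comp hTp hSinv)
  have hJinj : Injective J := LeftInverse.injective (g := J) (DFunLike.congr_fun hJ.2)
  rw [comp_comp_eq_and_comp_comp_eq_sub_iff hQT hP, ← hS1, T.comp_assoc,
    ← range_sub_le_ker_iff_comp_eq,
    ← jorthCompanion_le_ker_iff hJ₂.2 hJinj hW T.isClosed_ker]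
  exact ⟨fun h => ⟨_, (add_sub_cancel _ _).symm, h⟩,
    fun ⟨W, hVW, h⟩ => by rwa [hVW, add_sub_cancel_left]⟩

/-- A Bessel family `G` with synthesis operator `V` satisfies the duality
relations `TP₊V⁺ = Q`, `TP₋V⁺ = I - Q` iff `V = S⁻¹T + W` with `N(T)^[⊥] ⊆ N(W)`. -/
theorem dual_family_characterization
    (J : H →L[ℂ] H) (hJ : IsFundSym J) (f : I → H)
    (T : lp (fun _ : I => ℂ) 2 →L[ℂ] H)
    (hT : ∀ i, T (lp.single 2 i (1:ℂ)) = f i)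
    (hTsurj : Function.Surjective T)
    (Pp Pm : lp (fun _ : I => ℂ) 2 →L[ℂ] lp (fun _ : I => ℂ) 2)
    (hPp : ∀ (x : lp (fun _ : I => ℂ) 2) (i : I), Pp x i = if posIdx J f i then x i else 0)
    (hPm : ∀ (x : lp (fun _ : I => ℂ) 2) (i : I), Pm x i = if posIdx J f i then 0 else x i)
    (hJF : MaxUnifJPos J (LinearMap.range (T.comp Pp : lp (fun _ : I => ℂ) 2 →ₗ[ℂ] H)) ∧
      MaxUnifJNeg J (LinearMap.range (T.comp Pm : lp (fun _ : I => ℂ) 2 →ₗ[ℂ] H)))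
    (Tp : H →L[ℂ] lp (fun _ : I => ℂ) 2)
    (hTp : ∀ (x : lp (fun _ : I => ℂ) 2) (y : H), kre J (T x) y = kre (Pp - Pm) x (Tp y))
    (Sinv : H →L[ℂ] H)
    (hS1 : (T.comp Tp).comp Sinv = ContinuousLinearMap.id ℂ H)
    (hS2 : Sinv.comp (T.comp Tp) = ContinuousLinearMap.id ℂ H)
    (Q : H →L[ℂ] H) (hQidem : Q.comp Q = Q)
    (hQran : LinearMap.range (Q : H →ₗ[ℂ] H) = LinearMap.range (T.comp Pp : lp (fun _ : I => ℂ) 2 →ₗ[ℂ] H))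
    (hQker : LinearMap.ker (Q : H →ₗ[ℂ] H) = LinearMap.range (T.comp Pm : lp (fun _ : I => ℂ) 2 →ₗ[ℂ] H))
    (g : I → H) (hBessel : IsBessel g)
    (V : lp (fun _ : I => ℂ) 2 →L[ℂ] H)
    (hV : ∀ i, V (lp.single 2 i (1:ℂ)) = g i)
    (Vp : H →L[ℂ] lp (fun _ : I => ℂ) 2)
    (hVp : ∀ (x : lp (fun _ : I => ℂ) 2) (y : H), kre J (V x) y = kre (Pp - Pm) x (Vp y)) :
    (T.comp (Pp.comp Vp) = Q ∧
        T.comp (Pm.comp Vp) = ContinuousLinearMap.id ℂ H - Q) ↔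
      ∃ W : lp (fun _ : I => ℂ) 2 →L[ℂ] H, V = Sinv.comp T + W ∧
        JorthCompanion (Pp - Pm) (LinearMap.ker (T : lp (fun _ : I => ℂ) 2 →ₗ[ℂ] H)) ≤ LinearMap.ker (W : lp (fun _ : I => ℂ) 2 →ₗ[ℂ] H) :=
  dual_family_characterization_general J hJ f T Pp Pm hPp hPm Tp hTp Sinv hS1 Q hQidem hQran hQker V
    Vp hVp
end
end

section
/- Let F = {f_i} be a J-frame for a Krein space H. Then F is a tight J-frame (i.e. its J-frame operator equals αI for some α > 0) if and only if: M₋ = M₊^{[⊥]}, F₊ = {f_i}_{i∈I₊} is a tight frame for the Hilbert space (M₊, [·,·]), F₋ = {f_i}_{i∈I₋} is a tight frame for the Hilbert space (M₋, −[·,·]), and the two tight-frame bounds coincide. -/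
noncomputable section

open scoped Classical

open Function

variable {H : Type*} [NormedAddCommGroup H] [InnerProductSpace ℂ H] [CompleteSpace H]
variable {I : Type*} [DecidableEq I]

/-!
Let `Tp` be the Krein adjoint `T⁺` of `T`, `ℓ²(I)` carrying the fundamental symmetry `P₊ - P₋`.
Then `[T P₊ u, y] = ⟪P₊ u, P₊ T⁺ y⟫` and `[T P₋ u, y] = -⟪P₋ u, P₋ T⁺ y⟫`, so the frame sums of
`x` over `I₊` and `I₋` are `‖P₊ T⁺ x‖²` and `‖P₋ T⁺ x‖²`, and `[S x, x] = ‖P₊ T⁺ x‖² - ‖P₋ T⁺ x‖²`.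

If `S = α`, then for `x ∈ M₊` the vector `T P₋ T⁺ x = α x - T P₊ T⁺ x` lies in `M₊ ∩ M₋ = 0`, so
`P₋ T⁺ x = 0`: this is the tight-frame identity on `M₊` and, with its mirror image on `M₋`, the
`J`-orthogonality of `M₊` and `M₋`. Conversely, if `M₋ = M₊^[⊥]` and both families are `α`-tight,
then `P₋ T⁺` vanishes on `M₊` and `P₊ T⁺` on `M₋`, so `[S x, x] = α [x, x]` on `M₊ + M₋ = H`; by
polarization and injectivity of `J` an operator is determined by its `J`-quadratic form.
-/

open scoped lp

section Krein

variable {E : Type*} [NormedAddCommGroup E] [InnerProductSpace ℂ E] {J : E →L[ℂ] E}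

theorem kre_add_left (x y z : E) : kre J (x + y) z = kre J x z + kre J y z := by
  simp only [kre, map_add, inner_add_left]

theorem kre_add_right (x y z : E) : kre J x (y + z) = kre J x y + kre J x z := by
  simp only [kre, inner_add_right]

theorem kre_smul_left (c : ℂ) (x y : E) : kre J (c • x) y = starRingEnd ℂ c * kre J x y := by
  simp only [kre, map_smul, inner_smul_left]

theorem conj_kre [CompleteSpace E] (hJ : IsSelfAdjoint J) (x y : E) :
    starRingEnd ℂ (kre J x y) = kre J y x := by
  rw [kre, kre, inner_conj_symm]
  exact (hJ.isSymmetric y x).symm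

theorem ofReal_re_kre_self [CompleteSpace E] (hJ : IsSelfAdjoint J) (x : E) :
    ((kre J x x).re : ℂ) = kre J x x :=
  Complex.conj_eq_iff_re.mp (conj_kre hJ x x)

theorem kre_eq_zero_of_mem_jorthCompanion [CompleteSpace E] (hJ : IsSelfAdjoint J)
    {S : Submodule ℂ E} {x y : E} (hx : x ∈ S) (hy : y ∈ JorthCompanion J S) : kre J x y = 0 := by
  rw [← conj_kre hJ, hy x hx, map_zero]

theorem eq_of_forall_kre_apply_self_eq (hJ : J.comp J = ContinuousLinearMap.id ℂ E)
    {A B : E →L[ℂ] E} (h : ∀ x, kre J (A x) x = kre J (B x) x) : A = B := by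
  have hJAB : ((J.comp (A - B) : E →L[ℂ] E) : E →ₗ[ℂ] E) = 0 :=
    (inner_map_self_eq_zero _).mp fun x => by
      simpa [kre, inner_sub_left, sub_eq_zero] using h x
  ext x
  have hJx : J (A x - B x) = 0 := by simpa using LinearMap.congr_fun hJAB x
  rw [← sub_eq_zero]
  calc A x - B x = J (J (A x - B x)) := by rw [← ContinuousLinearMap.comp_apply, hJ]; rfl
    _ = 0 := by rw [hJx, map_zero]

theorem disjoint_of_unifJPos_of_unifJNeg {M N : Submodule ℂ E} (hM : UnifJPos J M)
    (hN : UnifJNeg J N) : Disjoint M N := by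
  obtain ⟨a, ha, hMa⟩ := hM
  obtain ⟨b, hb, hNb⟩ := hN
  refine Submodule.disjoint_def.mpr fun x hxM hxN => ?_
  by_contra hx
  have := pow_pos (norm_pos_iff.mpr hx) 2
  nlinarith [hMa x hxM, hNb x hxN]

end Krein

def IsCoordProj {ι : Type*} (A : ι → Prop) (P : ℓ²(ι, ℂ) →L[ℂ] ℓ²(ι, ℂ)) : Prop :=
  ∀ x i, P x i = if A i then x i else 0

namespace IsCoordProj

variable {ι : Type*} {A B : ι → Prop} {P Q : ℓ²(ι, ℂ) →L[ℂ] ℓ²(ι, ℂ)}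

theorem apply_apply (hP : IsCoordProj A P) (x : ℓ²(ι, ℂ)) : P (P x) = P x := by
  ext i
  rw [hP, hP]
  split_ifs <;> rfl

theorem apply_apply_eq_zero (hP : IsCoordProj A P) (hQ : IsCoordProj B Q)
    (hAB : ∀ i, A i → ¬ B i) (x : ℓ²(ι, ℂ)) : P (Q x) = 0 := by
  ext i
  rw [hP, hQ]
  split_ifs with hA hB
  · exact absurd hB (hAB i hA)
  all_goals rfl

theorem add_apply_compl (hP : IsCoordProj A P) (hQ : IsCoordProj (fun i => ¬ A i) Q)
    (x : ℓ²(ι, ℂ)) : P x + Q x = x := by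
  ext i
  rw [lp.coeFn_add, Pi.add_apply, hP, hQ]
  by_cases hA : A i <;> simp [hA]

theorem inner_apply_left (hP : IsCoordProj A P) (u v : ℓ²(ι, ℂ)) :
    inner ℂ (P u) v = inner ℂ (P u) (P v) := by
  rw [lp.inner_eq_tsum, lp.inner_eq_tsum]
  refine tsum_congr fun i => ?_
  rw [hP u, hP v]
  split_ifs <;> simp

theorem apply_single [DecidableEq ι] (hP : IsCoordProj A P) {i : ι} (hi : A i) (c : ℂ) :
    P (lp.single 2 i c) = lp.single 2 i c := by
  ext j
  rw [hP]
  split_ifs with hj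
  · rfl
  · rw [lp.single_apply_ne 2 i _ fun hji : j = i => hj (hji ▸ hi)]

theorem hasSum_norm_sq (hP : IsCoordProj A P) {g : ι → ℂ} (x : ℓ²(ι, ℂ))
    (hg : ∀ i, A i → ‖g i‖ = ‖P x i‖) :
    HasSum (fun i : {i // A i} => ‖g i‖ ^ 2) (‖P x‖ ^ 2) := by
  have hsum := lp.hasSum_norm (p := 2) (by norm_num) (P x)
  simp only [ENNReal.toReal_ofNat, Real.rpow_two] at hsum
  have hsupp : Function.support (fun i => ‖P x i‖ ^ 2) ⊆ {i | A i} := fun i hi => by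
    by_contra hA
    exact hi (by simp [hP x i, if_neg (show ¬ A i from hA)])
  have hsub : HasSum (fun i : {i // A i} => ‖P x i‖ ^ 2) (‖P x‖ ^ 2) :=
    (hasSum_subtype_iff_of_support_subset hsupp).mpr hsum
  convert hsub using 3 with i
  exact hg i i.2

end IsCoordProj

theorem apply_mem_range_comp {E F G : Type*} [AddCommGroup E] [Module ℂ E] [TopologicalSpace E]
    [AddCommGroup F] [Module ℂ F] [TopologicalSpace F] [AddCommGroup G] [Module ℂ G]
    [TopologicalSpace G] (T : F →L[ℂ] G) (P : E →L[ℂ] F) (u : E) :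
    T (P u) ∈ LinearMap.range (T.comp P : E →ₗ[ℂ] G) :=
  LinearMap.mem_range_self _ u

/-- `Tp` is the paper's `T⁺`: the adjoint of `T` from the Krein space `(ℓ²(ι), Pp - Pm)` to
`(E, J)`. -/
structure IsKreinAdjoint_s11 {E : Type*} [NormedAddCommGroup E] [InnerProductSpace ℂ E] {ι : Type*}
    (J : E →L[ℂ] E) (A : ι → Prop) (Pp Pm : ℓ²(ι, ℂ) →L[ℂ] ℓ²(ι, ℂ))
    (T : ℓ²(ι, ℂ) →L[ℂ] E) (Tp : E →L[ℂ] ℓ²(ι, ℂ)) : Prop where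
  pos : IsCoordProj A Pp
  neg : IsCoordProj (fun i => ¬ A i) Pm
  kre_apply : ∀ x y, kre J (T x) y = kre (Pp - Pm) x (Tp y)

namespace IsKreinAdjoint_s11

variable {E : Type*} [NormedAddCommGroup E] [InnerProductSpace ℂ E] {ι : Type*}
  {J : E →L[ℂ] E} {A : ι → Prop} {Pp Pm : ℓ²(ι, ℂ) →L[ℂ] ℓ²(ι, ℂ)}
  {T : ℓ²(ι, ℂ) →L[ℂ] E} {Tp : E →L[ℂ] ℓ²(ι, ℂ)}

theorem kre_apply_pos (h : IsKreinAdjoint_s11 J A Pp Pm T Tp) (v : ℓ²(ι, ℂ)) (y : E) :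
    kre J (T (Pp v)) y = inner ℂ (Pp v) (Pp (Tp y)) := by
  rw [h.kre_apply, kre, sub_apply, h.pos.apply_apply,
    h.neg.apply_apply_eq_zero h.pos (fun _ hnA => hnA), sub_zero, h.pos.inner_apply_left]

theorem kre_apply_neg (h : IsKreinAdjoint_s11 J A Pp Pm T Tp) (v : ℓ²(ι, ℂ)) (y : E) :
    kre J (T (Pm v)) y = -inner ℂ (Pm v) (Pm (Tp y)) := by
  rw [h.kre_apply, kre, sub_apply, h.neg.apply_apply,
    h.pos.apply_apply_eq_zero h.neg (fun _ hA hnA => hnA hA), zero_sub, inner_neg_left,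
    h.neg.inner_apply_left]

theorem kre_apply_Pp_Tp_self (h : IsKreinAdjoint_s11 J A Pp Pm T Tp) (x : E) :
    kre J (T (Pp (Tp x))) x = (‖Pp (Tp x)‖ ^ 2 : ℝ) := by
  rw [h.kre_apply_pos, inner_self_eq_norm_sq_to_K]
  norm_cast

theorem kre_apply_Pm_Tp_self (h : IsKreinAdjoint_s11 J A Pp Pm T Tp) (x : E) :
    kre J (T (Pm (Tp x))) x = -(‖Pm (Tp x)‖ ^ 2 : ℝ) := by
  rw [h.kre_apply_neg, inner_self_eq_norm_sq_to_K]
  norm_cast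

theorem Pp_Tp_eq_zero_of_kre (h : IsKreinAdjoint_s11 J A Pp Pm T Tp) {x : E}
    (hx : kre J (T (Pp (Tp x))) x = 0) : Pp (Tp x) = 0 := by
  rw [h.kre_apply_Pp_Tp_self] at hx
  exact norm_eq_zero.mp (pow_eq_zero_iff two_ne_zero |>.mp (by exact_mod_cast hx))

theorem Pm_Tp_eq_zero_of_kre (h : IsKreinAdjoint_s11 J A Pp Pm T Tp) {x : E}
    (hx : kre J (T (Pm (Tp x))) x = 0) : Pm (Tp x) = 0 := by
  rw [h.kre_apply_Pm_Tp_self, neg_eq_zero] at hx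
  exact norm_eq_zero.mp (pow_eq_zero_iff two_ne_zero |>.mp (by exact_mod_cast hx))

theorem apply_Pp_add_apply_Pm (h : IsKreinAdjoint_s11 J A Pp Pm T Tp) (u : ℓ²(ι, ℂ)) :
    T (Pp u) + T (Pm u) = T u := by
  rw [← map_add, h.pos.add_apply_compl h.neg]

theorem kre_apply_Tp_self (h : IsKreinAdjoint_s11 J A Pp Pm T Tp) (x : E) :
    kre J (T (Tp x)) x = (‖Pp (Tp x)‖ ^ 2 : ℝ) - (‖Pm (Tp x)‖ ^ 2 : ℝ) := by
  rw [← h.apply_Pp_add_apply_Pm, kre_add_left, h.kre_apply_Pp_Tp_self, h.kre_apply_Pm_Tp_self,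
    sub_eq_add_neg]

theorem kre_single_of_pos [DecidableEq ι] (h : IsKreinAdjoint_s11 J A Pp Pm T Tp) {i : ι} (hi : A i)
    (y : E) : kre J (T (lp.single 2 i 1)) y = Tp y i := by
  have hsingle := h.kre_apply_pos (lp.single 2 i 1) y
  rw [h.pos.apply_single hi] at hsingle
  rw [hsingle, lp.inner_single_left, h.pos, if_pos hi]
  simp

theorem kre_single_of_neg [DecidableEq ι] (h : IsKreinAdjoint_s11 J A Pp Pm T Tp) {i : ι}
    (hi : ¬ A i) (y : E) : kre J (T (lp.single 2 i 1)) y = -Tp y i := by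
  have hsingle := h.kre_apply_neg (lp.single 2 i 1) y
  rw [h.neg.apply_single hi] at hsingle
  rw [hsingle, lp.inner_single_left, h.neg, if_pos hi]
  simp

local notation "M₊" => LinearMap.range (T.comp Pp : ℓ²(ι, ℂ) →ₗ[ℂ] E)
local notation "M₋" => LinearMap.range (T.comp Pm : ℓ²(ι, ℂ) →ₗ[ℂ] E)

theorem hasSum_norm_kre_sq_pos [CompleteSpace E] [DecidableEq ι]
    (h : IsKreinAdjoint_s11 J A Pp Pm T Tp) (hJ : IsSelfAdjoint J) {f : ι → E}
    (hT : ∀ i, T (lp.single 2 i 1) = f i) (y : E) :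
    HasSum (fun i : {i // A i} => ‖kre J y (f i)‖ ^ 2) (‖Pp (Tp y)‖ ^ 2) :=
  h.pos.hasSum_norm_sq (g := fun i => kre J y (f i)) (Tp y) fun i hi => by
    rw [← conj_kre hJ, Complex.norm_conj, ← hT i, h.kre_single_of_pos hi, h.pos, if_pos hi]

theorem hasSum_norm_kre_sq_neg [CompleteSpace E] [DecidableEq ι]
    (h : IsKreinAdjoint_s11 J A Pp Pm T Tp) (hJ : IsSelfAdjoint J) {f : ι → E}
    (hT : ∀ i, T (lp.single 2 i 1) = f i) (y : E) :
    HasSum (fun i : {i // ¬ A i} => ‖kre J y (f i)‖ ^ 2) (‖Pm (Tp y)‖ ^ 2) :=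
  h.neg.hasSum_norm_sq (g := fun i => kre J y (f i)) (Tp y) fun i hi => by
    rw [← conj_kre hJ, Complex.norm_conj, ← hT i, h.kre_single_of_neg hi, norm_neg, h.neg,
      if_pos hi]

theorem Pp_Tp_eq_zero_of_mem_jorthCompanion [CompleteSpace E] (h : IsKreinAdjoint_s11 J A Pp Pm T Tp)
    (hJ : IsSelfAdjoint J) {x : E} (hx : x ∈ JorthCompanion J M₊) : Pp (Tp x) = 0 :=
  h.Pp_Tp_eq_zero_of_kre <|
    kre_eq_zero_of_mem_jorthCompanion hJ (apply_mem_range_comp T Pp (Tp x)) hx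

theorem Pm_Tp_eq_zero_of_le_jorthCompanion (h : IsKreinAdjoint_s11 J A Pp Pm T Tp)
    (hle : M₋ ≤ JorthCompanion J M₊) {x : E} (hx : x ∈ M₊) : Pm (Tp x) = 0 :=
  h.Pm_Tp_eq_zero_of_kre (hle (apply_mem_range_comp T Pm (Tp x)) x hx)

section Tight

variable {α : ℝ}

theorem Pm_Tp_eq_zero_of_mem_pos (h : IsKreinAdjoint_s11 J A Pp Pm T Tp) (hdisj : Disjoint M₊ M₋)
    (hS : ∀ x, T (Tp x) = (α : ℂ) • x) {x : E} (hx : x ∈ M₊) : Pm (Tp x) = 0 := by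
  have hT0 : T (Pm (Tp x)) = 0 := by
    refine Submodule.disjoint_def.mp hdisj _ ?_ (apply_mem_range_comp T Pm (Tp x))
    rw [eq_sub_of_add_eq' (h.apply_Pp_add_apply_Pm (Tp x)), hS]
    exact M₊.sub_mem (M₊.smul_mem _ hx) (apply_mem_range_comp T Pp (Tp x))
  exact h.Pm_Tp_eq_zero_of_kre (by rw [hT0]; simp [kre])

theorem Pp_Tp_eq_zero_of_mem_neg (h : IsKreinAdjoint_s11 J A Pp Pm T Tp) (hdisj : Disjoint M₊ M₋)
    (hS : ∀ x, T (Tp x) = (α : ℂ) • x) {x : E} (hx : x ∈ M₋) : Pp (Tp x) = 0 := by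
  have hT0 : T (Pp (Tp x)) = 0 := by
    refine Submodule.disjoint_def.mp hdisj _ (apply_mem_range_comp T Pp (Tp x)) ?_
    rw [eq_sub_of_add_eq (h.apply_Pp_add_apply_Pm (Tp x)), hS]
    exact M₋.sub_mem (M₋.smul_mem _ hx) (apply_mem_range_comp T Pm (Tp x))
  exact h.Pp_Tp_eq_zero_of_kre (by rw [hT0]; simp [kre])

theorem norm_Pp_Tp_sq_of_mem_pos (h : IsKreinAdjoint_s11 J A Pp Pm T Tp) (hdisj : Disjoint M₊ M₋)
    (hS : ∀ x, T (Tp x) = (α : ℂ) • x) {x : E} (hx : x ∈ M₊) :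
    ‖Pp (Tp x)‖ ^ 2 = α * (kre J x x).re := by
  have hre := congrArg Complex.re (h.kre_apply_Tp_self x)
  rw [hS, kre_smul_left, Complex.conj_ofReal, h.Pm_Tp_eq_zero_of_mem_pos hdisj hS hx] at hre
  simp only [Complex.re_ofReal_mul, Complex.sub_re, Complex.ofReal_re, norm_zero] at hre
  linarith

theorem norm_Pm_Tp_sq_of_mem_neg (h : IsKreinAdjoint_s11 J A Pp Pm T Tp) (hdisj : Disjoint M₊ M₋)
    (hS : ∀ x, T (Tp x) = (α : ℂ) • x) {x : E} (hx : x ∈ M₋) :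
    ‖Pm (Tp x)‖ ^ 2 = α * -(kre J x x).re := by
  have hre := congrArg Complex.re (h.kre_apply_Tp_self x)
  rw [hS, kre_smul_left, Complex.conj_ofReal, h.Pp_Tp_eq_zero_of_mem_neg hdisj hS hx] at hre
  simp only [Complex.re_ofReal_mul, Complex.sub_re, Complex.ofReal_re, norm_zero] at hre
  linarith

theorem range_neg_eq_jorthCompanion [CompleteSpace E] (h : IsKreinAdjoint_s11 J A Pp Pm T Tp)
    (hJ : IsSelfAdjoint J) (hdisj : Disjoint M₊ M₋) (hS : ∀ x, T (Tp x) = (α : ℂ) • x)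
    (hα : α ≠ 0) : M₋ = JorthCompanion J M₊ := by
  apply le_antisymm
  · rintro _ ⟨u, rfl⟩ _ ⟨v, rfl⟩
    change kre J (T (Pm u)) (T (Pp v)) = 0
    rw [h.kre_apply_neg, h.Pm_Tp_eq_zero_of_mem_pos hdisj hS (apply_mem_range_comp T Pp v),
      inner_zero_right, neg_zero]
  · intro x hx
    have hTPm : T (Pm (Tp x)) = (α : ℂ) • x := by
      rw [← hS, ← h.apply_Pp_add_apply_Pm (Tp x), h.Pp_Tp_eq_zero_of_mem_jorthCompanion hJ hx,
        map_zero, zero_add]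
    refine ⟨(α : ℂ)⁻¹ • Tp x, ?_⟩
    change T (Pm ((α : ℂ)⁻¹ • Tp x)) = x
    rw [map_smul, map_smul, hTPm, smul_smul, inv_mul_cancel₀ (by exact_mod_cast hα), one_smul]

theorem kre_apply_Tp_add_of_tight [CompleteSpace E] (h : IsKreinAdjoint_s11 J A Pp Pm T Tp)
    (hJ : IsSelfAdjoint J) (hm : M₋ = JorthCompanion J M₊)
    (hpos : ∀ x ∈ M₊, ‖Pp (Tp x)‖ ^ 2 = α * (kre J x x).re)
    (hneg : ∀ x ∈ M₋, ‖Pm (Tp x)‖ ^ 2 = α * -(kre J x x).re) {a b : E} (ha : a ∈ M₊)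
    (hb : b ∈ M₋) : kre J (T (Tp (a + b))) (a + b) = α * kre J (a + b) (a + b) := by
  have hb' : b ∈ JorthCompanion J M₊ := hm ▸ hb
  have hPp : Pp (Tp (a + b)) = Pp (Tp a) := by
    rw [map_add, map_add, h.Pp_Tp_eq_zero_of_mem_jorthCompanion hJ hb', add_zero]
  have hPm : Pm (Tp (a + b)) = Pm (Tp b) := by
    rw [map_add, map_add, h.Pm_Tp_eq_zero_of_le_jorthCompanion hm.le ha, zero_add]
  rw [h.kre_apply_Tp_self, hPp, hPm, hpos a ha, hneg b hb, kre_add_left, kre_add_right,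
    kre_add_right, kre_eq_zero_of_mem_jorthCompanion hJ ha hb', hb' a ha]
  push_cast
  linear_combination (α : ℂ) * (ofReal_re_kre_self hJ a + ofReal_re_kre_self hJ b)

end Tight

end IsKreinAdjoint_s11

/-- `F` is a tight J-frame (`S = αI`, `α > 0`) iff `M₋ = M₊^[⊥]` and
`F₊`, `F₋` are tight frames for `(M₊, [·,·])`, `(M₋, -[·,·])` with the same bound. -/
theorem tight_jframe_iff
    (J : H →L[ℂ] H) (hJ : IsFundSym J) (f : I → H)
    (T : lp (fun _ : I => ℂ) 2 →L[ℂ] H)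
    (hT : ∀ i, T (lp.single 2 i (1:ℂ)) = f i)
    (hTsurj : Function.Surjective T)
    (Pp Pm : lp (fun _ : I => ℂ) 2 →L[ℂ] lp (fun _ : I => ℂ) 2)
    (hPp : ∀ (x : lp (fun _ : I => ℂ) 2) (i : I), Pp x i = if posIdx J f i then x i else 0)
    (hPm : ∀ (x : lp (fun _ : I => ℂ) 2) (i : I), Pm x i = if posIdx J f i then 0 else x i)
    (hJF : MaxUnifJPos J (LinearMap.range (T.comp Pp : lp (fun _ : I => ℂ) 2 →ₗ[ℂ] H)) ∧
      MaxUnifJNeg J (LinearMap.range (T.comp Pm : lp (fun _ : I => ℂ) 2 →ₗ[ℂ] H)))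
    (Tp : H →L[ℂ] lp (fun _ : I => ℂ) 2)
    (hTp : ∀ (x : lp (fun _ : I => ℂ) 2) (y : H), kre J (T x) y = kre (Pp - Pm) x (Tp y)) :
    (∃ α : ℝ, 0 < α ∧ T.comp Tp = (α : ℂ) • ContinuousLinearMap.id ℂ H) ↔
      (LinearMap.range (T.comp Pm : lp (fun _ : I => ℂ) 2 →ₗ[ℂ] H) = JorthCompanion J (LinearMap.range (T.comp Pp : lp (fun _ : I => ℂ) 2 →ₗ[ℂ] H)) ∧
        ∃ α : ℝ, 0 < α ∧
          (∀ x ∈ LinearMap.range (T.comp Pp : lp (fun _ : I => ℂ) 2 →ₗ[ℂ] H),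
            HasSum (fun i : {i // posIdx J f i} => ‖kre J x (f i.1)‖ ^ 2)
              (α * (kre J x x).re)) ∧
          (∀ x ∈ LinearMap.range (T.comp Pm : lp (fun _ : I => ℂ) 2 →ₗ[ℂ] H),
            HasSum (fun i : {i // ¬ posIdx J f i} => ‖kre J x (f i.1)‖ ^ 2)
              (α * (-(kre J x x).re)))) := by
  have h : IsKreinAdjoint_s11 J (posIdx J f) Pp Pm T Tp :=
    ⟨hPp, fun x i => by by_cases hi : posIdx J f i <;> simp [hPm, hi], hTp⟩
  have hdisj := disjoint_of_unifJPos_of_unifJNeg hJF.1.1 hJF.2.1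
  constructor
  · rintro ⟨α, hα, hS⟩
    have hS' : ∀ x, T (Tp x) = (α : ℂ) • x := fun x => by simpa using congr($hS x)
    refine ⟨h.range_neg_eq_jorthCompanion hJ.1 hdisj hS' hα.ne', α, hα, fun x hx => ?_,
      fun x hx => ?_⟩
    · rw [← h.norm_Pp_Tp_sq_of_mem_pos hdisj hS' hx]
      exact h.hasSum_norm_kre_sq_pos hJ.1 hT x
    · rw [← h.norm_Pm_Tp_sq_of_mem_neg hdisj hS' hx]
      exact h.hasSum_norm_kre_sq_neg hJ.1 hT x
  · rintro ⟨hm, α, hα, hpos, hneg⟩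
    refine ⟨α, hα, eq_of_forall_kre_apply_self_eq hJ.2 fun x => ?_⟩
    obtain ⟨u, rfl⟩ := hTsurj x
    rw [← h.apply_Pp_add_apply_Pm u, ContinuousLinearMap.comp_apply, smul_apply,
      ContinuousLinearMap.id_apply, kre_smul_left, Complex.conj_ofReal]
    exact h.kre_apply_Tp_add_of_tight hJ.1 hm
      (fun x hx => (h.hasSum_norm_kre_sq_pos hJ.1 hT x).unique (hpos x hx))
      (fun x hx => (h.hasSum_norm_kre_sq_neg hJ.1 hT x).unique (hneg x hx))
      (apply_mem_range_comp T Pp u) (apply_mem_range_comp T Pm u)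
end
end
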